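/- arXiv:1509.03092 — 5 statements merged into one kernel-verified Lean document; each statement's English description precedes it below -/
import Mathlib

section
/- Let G be a cubic (3-regular) simple graph of order n which has an S_{1,2}-decomposition, and let T be the set of vertices of G which occur only as pendant vertices (vertices of degree 1) in the copies of S_{1,2} of this decomposition. Then T is an independent set in G and |T| = n/4. -/
open SimpleGraph

variable {V : Type*}

/-- A (potential) copy of the double-star `S_{1,r-1}` in a graph on vertex set `V`.
`center` is the vertex of degree `r`, `mid` is the vertex of degree 2 (adjacent to `center`),
`pend` is the pendant neighbour of `mid`, and `leaf i` are the `r - 1` pendant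
neighbours of `center`.  For `r = 3` this is the double-star `S_{1,2}`. -/
structure DoubleStarCopy (V : Type*) (r : ℕ) where
  center : V
  mid : V
  pend : V
  leaf : Fin (r - 1) → V

namespace DoubleStarCopy

variable {r : ℕ}

/-- The list of vertices of the copy. -/
def vertList (t : DoubleStarCopy V r) : List V :=
  t.center :: t.mid :: t.pend :: List.ofFn t.leaf

/-- The vertex set of the copy. -/
def verts (t : DoubleStarCopy V r) : Set V := {v | v ∈ t.vertList}

/-- The pendant (degree-one) vertices of the copy. -/
def pendants (t : DoubleStarCopy V r) : Set V := insert t.pend (Set.range t.leaf)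

/-- The edge set of the copy. -/
def edges (t : DoubleStarCopy V r) : Set (Sym2 V) :=
  insert s(t.center, t.mid) (insert s(t.mid, t.pend)
    (Set.range fun i => s(t.center, t.leaf i)))

/-- `t` is a genuine copy of the double-star `S_{1,r-1}` inside `G`:
its vertices are pairwise distinct and all its edges are edges of `G`. -/
def IsCopyIn (G : SimpleGraph V) (t : DoubleStarCopy V r) : Prop :=
  t.vertList.Nodup ∧ t.edges ⊆ G.edgeSet

end DoubleStarCopy

/-- `𝒟` is an `S_{1,r-1}`-decomposition of `G`: every member of `𝒟` is a copy of the
double-star `S_{1,r-1}` in `G`, and every edge of `G` lies in exactly one member of `𝒟`. -/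
def IsDSDecompOf (G : SimpleGraph V) (r : ℕ) (𝒟 : Set (DoubleStarCopy V r)) : Prop :=
  (∀ t ∈ 𝒟, t.IsCopyIn G) ∧ ∀ e ∈ G.edgeSet, ∃! t, t ∈ 𝒟 ∧ e ∈ t.edges

/-- `G` has an `S_{1,r-1}`-decomposition. -/
def HasDSDecomp (G : SimpleGraph V) (r : ℕ) : Prop :=
  ∃ 𝒟 : Set (DoubleStarCopy V r), IsDSDecompOf G r 𝒟

/-- `G` is `(S_{1,r-1}, S)`-decomposable: it has an `S_{1,r-1}`-decomposition in which `S`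
is exactly the set of vertices occurring as the degree-`r` vertex of some copy. -/
def IsDSSDecomposable (G : SimpleGraph V) (r : ℕ) (S : Set V) : Prop :=
  ∃ 𝒟 : Set (DoubleStarCopy V r), IsDSDecompOf G r 𝒟 ∧ S = {v | ∃ t ∈ 𝒟, t.center = v}

/-- `S` is an independent set of `G`. -/
def IsIndepSetIn (G : SimpleGraph V) (S : Set V) : Prop :=
  ∀ ⦃u⦄, u ∈ S → ∀ ⦃v⦄, v ∈ S → ¬ G.Adj u v

/-- The independence number `α(G)`. -/
noncomputable def indepNumber (G : SimpleGraph V) : ℕ :=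
  sSup {k | ∃ S : Set V, IsIndepSetIn G S ∧ S.ncard = k}

/-- `D` is a dominating set of `G`. -/
def IsDomSet (G : SimpleGraph V) (D : Set V) : Prop :=
  ∀ v ∉ D, ∃ d ∈ D, G.Adj v d

/-- The domination number `γ(G)`. -/
noncomputable def domNumber (G : SimpleGraph V) : ℕ :=
  sInf {k | ∃ D : Set V, IsDomSet G D ∧ D.ncard = k}

/-- `N(X)`, the union of the neighbourhoods of the vertices of `X`. -/
def nbhd (G : SimpleGraph V) (X : Set V) : Set V := {v | ∃ x ∈ X, G.Adj x v}

/-- The degree of `v` in the graph `G ∖ S` (for `v ∉ S`). -/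
noncomputable def degIn (G : SimpleGraph V) (S : Set V) (v : V) : ℕ :=
  {w | w ∉ S ∧ G.Adj v w}.ncard

/-- The vertex `v` lies on a cycle of length `k` in `G`. -/
def InCycleOfLength (G : SimpleGraph V) (v : V) (k : ℕ) : Prop :=
  ∃ c : G.Walk v v, c.IsCycle ∧ c.length = k

/-- A graph is a cycle: it has a (genuine, simple) cycle passing through all of
its vertices and using all of its edges. -/
def IsCycleGraph {W : Type*} (H : SimpleGraph W) : Prop :=
  ∃ (v : W) (c : H.Walk v v), c.IsCycle ∧ (∀ x, x ∈ c.support) ∧ ∀ e ∈ H.edgeSet, e ∈ c.edges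

/-- A graph is a path: it has a simple path passing through all of its vertices and
using all of its edges. -/
def IsPathGraph {W : Type*} (H : SimpleGraph W) : Prop :=
  ∃ (u v : W) (p : H.Walk u v), p.IsPath ∧ (∀ x, x ∈ p.support) ∧ ∀ e ∈ H.edgeSet, e ∈ p.edges

/-- `S` is a cycling set of `G`: every connected component of `G ∖ S` is a cycle. -/
def IsCyclingSet (G : SimpleGraph V) (S : Set V) : Prop :=
  ∀ c : (G.induce Sᶜ).ConnectedComponent, IsCycleGraph ((G.induce Sᶜ).induce c.supp)

/-- `(A, B)` is a bipartition of `G`. -/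
def IsBipartitionOf (G : SimpleGraph V) (A B : Set V) : Prop :=
  A ∪ B = Set.univ ∧ Disjoint A B ∧ ∀ ⦃u v⦄, G.Adj u v → (u ∈ A ↔ v ∈ B)

/-- The edge set of the graph `G ∖ S`: edges of `G` avoiding `S`. -/
def removedEdges (G : SimpleGraph V) (S : Set V) : Set (Sym2 V) :=
  {e | e ∈ G.edgeSet ∧ ∀ v ∈ e, v ∉ S}

/-- Adjacency in the auxiliary bipartite graph `H = (S, L)`:
`s ∈ S` is adjacent to the vertex `u_e` corresponding to an edge `e` of `G ∖ S`
iff `G` has an edge with one end `s` whose other end lies on `e`. -/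
def auxAdj (G : SimpleGraph V) (s : V) (e : Sym2 V) : Prop :=
  ∃ w ∈ e, G.Adj s w

/-- The auxiliary bipartite graph `H = (S, L)` has a perfect matching: a bijection
between `S` and the edges of `G ∖ S` matching each `s ∈ S` with an `H`-neighbour. -/
def AuxHasPerfectMatching (G : SimpleGraph V) (S : Set V) : Prop :=
  ∃ m : ↥S ≃ ↥(removedEdges G S), ∀ s : ↥S, auxAdj G (s : V) ((m s : Sym2 V))

/-!
In a cubic graph the centre of a copy of `S_{1,2}` uses all three edges at it and the middle
vertex two of them, and edges of distinct copies are distinct; so no vertex is the centre or the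
middle vertex of two copies, or the centre of one and the middle vertex of another. Every vertex
lies on an edge, so `T` is the complement of the `2|𝒟|` centres and middle vertices. Counting edges,
`4|𝒟| = |E| = 3n/2`, hence `|T| = n - 2|𝒟| = n/4`. Every edge of a copy has its centre or its
middle vertex as an endpoint, so no edge joins two vertices of `T`.
-/

namespace DoubleStarCopy

variable {r : ℕ} {t : DoubleStarCopy V r} {u v : V}

lemma mem_verts : v ∈ t.verts ↔ v = t.center ∨ v = t.mid ∨ v = t.pend ∨ ∃ i, v = t.leaf i := by
  simp [verts, vertList, List.mem_ofFn, eq_comm]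

lemma mem_pendants : v ∈ t.pendants ↔ v = t.pend ∨ ∃ i, v = t.leaf i := by
  simp [pendants, eq_comm]

lemma mem_edges {e : Sym2 V} :
    e ∈ t.edges ↔ e = s(t.center, t.mid) ∨ e = s(t.mid, t.pend) ∨
      ∃ i, e = s(t.center, t.leaf i) := by
  simp [edges, eq_comm]

lemma nodup_vertList_iff : t.vertList.Nodup ↔
    t.center ≠ t.mid ∧ t.center ≠ t.pend ∧ t.mid ≠ t.pend ∧ (∀ i, t.center ≠ t.leaf i) ∧
      (∀ i, t.mid ≠ t.leaf i) ∧ (∀ i, t.pend ≠ t.leaf i) ∧ Function.Injective t.leaf := by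
  simp only [vertList, List.nodup_cons, List.mem_cons, List.mem_ofFn, List.nodup_ofFn,
    not_or, not_exists]
  constructor
  · rintro ⟨⟨h₁, h₂, h₃⟩, ⟨h₄, h₅⟩, h₆, h₇⟩
    exact ⟨h₁, h₂, h₄, fun i hi => h₃ i hi.symm, fun i hi => h₅ i hi.symm,
      fun i hi => h₆ i hi.symm, h₇⟩
  · rintro ⟨h₁, h₂, h₄, h₃, h₅, h₆, h₇⟩
    exact ⟨⟨h₁, h₂, fun i hi => h₃ i hi.symm⟩, ⟨h₄, fun i hi => h₅ i hi.symm⟩,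
      fun i hi => h₆ i hi.symm, h₇⟩

lemma center_ne_mid (h : t.vertList.Nodup) : t.center ≠ t.mid := (nodup_vertList_iff.1 h).1
lemma center_ne_pend (h : t.vertList.Nodup) : t.center ≠ t.pend := (nodup_vertList_iff.1 h).2.1
lemma mid_ne_pend (h : t.vertList.Nodup) : t.mid ≠ t.pend := (nodup_vertList_iff.1 h).2.2.1
lemma center_ne_leaf (h : t.vertList.Nodup) (i : Fin (r - 1)) : t.center ≠ t.leaf i :=
  (nodup_vertList_iff.1 h).2.2.2.1 i
lemma mid_ne_leaf (h : t.vertList.Nodup) (i : Fin (r - 1)) : t.mid ≠ t.leaf i :=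
  (nodup_vertList_iff.1 h).2.2.2.2.1 i
lemma leaf_injective (h : t.vertList.Nodup) : Function.Injective t.leaf :=
  (nodup_vertList_iff.1 h).2.2.2.2.2.2

lemma center_notMem_pendants (h : t.vertList.Nodup) : t.center ∉ t.pendants := by
  simp [mem_pendants, center_ne_pend h, center_ne_leaf h]

lemma mid_notMem_pendants (h : t.vertList.Nodup) : t.mid ∉ t.pendants := by
  simp [mem_pendants, mid_ne_pend h, mid_ne_leaf h]

lemma mem_verts_of_mem_edges (he : s(u, v) ∈ t.edges) : u ∈ t.verts := by
  rw [mem_edges] at he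
  rw [mem_verts]
  rcases he with he | he | ⟨i, he⟩ <;> rw [Sym2.eq_iff] at he <;> tauto

lemma notMem_pendants_or_notMem_pendants (h : t.vertList.Nodup) (he : s(u, v) ∈ t.edges) :
    u ∉ t.pendants ∨ v ∉ t.pendants := by
  rw [mem_edges] at he
  rcases he with he | he | ⟨i, he⟩ <;> rw [Sym2.eq_iff] at he <;>
    rcases he with ⟨rfl, rfl⟩ | ⟨rfl, rfl⟩ <;>
    simp [center_notMem_pendants h, mid_notMem_pendants h]

lemma ncard_edges (h : t.vertList.Nodup) : t.edges.ncard = r - 1 + 2 := by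
  have hinj : Function.Injective fun i => s(t.center, t.leaf i) := fun i j hij =>
    leaf_injective h (Sym2.congr_right.1 hij)
  rw [edges, Set.ncard_insert_of_notMem, Set.ncard_insert_of_notMem,
    Set.ncard_range_of_injective hinj, Nat.card_eq_fintype_card, Fintype.card_fin]
  · simp [center_ne_mid h, (mid_ne_leaf h _).symm]
  · simp [center_ne_mid h, center_ne_pend h, (mid_ne_leaf h _).symm]

def neighborSet (t : DoubleStarCopy V r) (v : V) : Set V := {w | s(v, w) ∈ t.edges}

lemma neighborSet_center (h : t.vertList.Nodup) :
    t.neighborSet t.center = insert t.mid (Set.range t.leaf) := by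
  ext w
  simp [neighborSet, mem_edges, center_ne_mid h, center_ne_pend h, center_ne_leaf h,
    eq_comm]

lemma neighborSet_mid (h : t.vertList.Nodup) : t.neighborSet t.mid = {t.center, t.pend} := by
  ext w
  simp [neighborSet, mem_edges, center_ne_mid h, mid_ne_pend h, mid_ne_leaf h, eq_comm]

lemma ncard_neighborSet_center (h : t.vertList.Nodup) :
    (t.neighborSet t.center).ncard = r - 1 + 1 := by
  rw [neighborSet_center h, Set.ncard_insert_of_notMem (by simpa using (mid_ne_leaf h · ·.symm)),
    Set.ncard_range_of_injective (leaf_injective h), Nat.card_eq_fintype_card, Fintype.card_fin]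

lemma ncard_neighborSet_mid (h : t.vertList.Nodup) : (t.neighborSet t.mid).ncard = 2 := by
  rw [neighborSet_mid h, Set.ncard_pair (center_ne_pend h)]

end DoubleStarCopy

instance DoubleStarCopy.instFinite [Finite V] (r : ℕ) : Finite (DoubleStarCopy V r) :=
  Finite.of_injective (fun t => (t.center, t.mid, t.pend, t.leaf))
    (by rintro ⟨⟩ ⟨⟩ h; simp_all)

def pendantOnlyVerts {r : ℕ} (𝒟 : Set (DoubleStarCopy V r)) : Set V :=
  {v | (∃ t ∈ 𝒟, v ∈ t.verts) ∧ ∀ t ∈ 𝒟, v ∈ t.verts → v ∈ t.pendants}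

namespace IsDSDecompOf

open DoubleStarCopy

variable {G : SimpleGraph V} {r : ℕ} {𝒟 : Set (DoubleStarCopy V r)}
  {t₁ t₂ : DoubleStarCopy V r} {u v : V}

lemma nodup (hdec : IsDSDecompOf G r 𝒟) {t : DoubleStarCopy V r} (ht : t ∈ 𝒟) :
    t.vertList.Nodup :=
  (hdec.1 t ht).1

lemma edges_subset_edgeSet (hdec : IsDSDecompOf G r 𝒟) {t : DoubleStarCopy V r} (ht : t ∈ 𝒟) :
    t.edges ⊆ G.edgeSet :=
  (hdec.1 t ht).2

lemma eq_of_mem_edges (hdec : IsDSDecompOf G r 𝒟) (h₁ : t₁ ∈ 𝒟) (h₂ : t₂ ∈ 𝒟) {e : Sym2 V}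
    (he₁ : e ∈ t₁.edges) (he₂ : e ∈ t₂.edges) : t₁ = t₂ :=
  (hdec.2 e (hdec.edges_subset_edgeSet h₁ he₁)).unique ⟨h₁, he₁⟩ ⟨h₂, he₂⟩

lemma pairwiseDisjoint_edges (hdec : IsDSDecompOf G r 𝒟) : 𝒟.PairwiseDisjoint edges :=
  fun _ h₁ _ h₂ hne => Set.disjoint_left.2 fun _ he₁ he₂ =>
    hne (hdec.eq_of_mem_edges h₁ h₂ he₁ he₂)

lemma biUnion_edges (hdec : IsDSDecompOf G r 𝒟) : ⋃ t ∈ 𝒟, t.edges = G.edgeSet := by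
  ext e
  simp only [Set.mem_iUnion, exists_prop]
  exact ⟨fun ⟨t, ht, he⟩ => hdec.edges_subset_edgeSet ht he, fun he => (hdec.2 e he).exists⟩

lemma card_edgeFinset [Fintype V] [DecidableRel G.Adj] (hdec : IsDSDecompOf G r 𝒟) :
    G.edgeFinset.card = (r - 1 + 2) * 𝒟.ncard := by
  rw [← Set.ncard_coe_finset, coe_edgeFinset, ← hdec.biUnion_edges,
    Set.toFinite 𝒟 |>.ncard_biUnion (fun t _ => Set.toFinite _) hdec.pairwiseDisjoint_edges,
    finsum_mem_congr rfl fun t ht => ncard_edges (hdec.nodup ht), ← finsum_one, mul_finsum_mem]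
  simp only [mul_one]

lemma exists_mem_verts (hdec : IsDSDecompOf G r 𝒟) (hadj : G.Adj u v) : ∃ t ∈ 𝒟, u ∈ t.verts :=
  have ⟨t, ⟨ht, he⟩, _⟩ := hdec.2 s(u, v) hadj
  ⟨t, ht, mem_verts_of_mem_edges he⟩

lemma isIndepSetIn_pendantOnlyVerts (hdec : IsDSDecompOf G r 𝒟) :
    IsIndepSetIn G (pendantOnlyVerts 𝒟) := by
  intro u hu v hv hadj
  obtain ⟨t, ⟨ht, he⟩, -⟩ := hdec.2 s(u, v) hadj
  have hev : s(v, u) ∈ t.edges := Sym2.eq_swap ▸ he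
  rcases notMem_pendants_or_notMem_pendants (hdec.nodup ht) he with h | h
  · exact h (hu.2 t ht (mem_verts_of_mem_edges he))
  · exact h (hv.2 t ht (mem_verts_of_mem_edges hev))

lemma pendantOnlyVerts_eq_compl (hdec : IsDSDecompOf G r 𝒟) (hG : ∀ v, ∃ w, G.Adj v w) :
    pendantOnlyVerts 𝒟 = (DoubleStarCopy.center '' 𝒟 ∪ DoubleStarCopy.mid '' 𝒟)ᶜ := by
  ext v
  simp only [pendantOnlyVerts, Set.mem_ofPred_eq, Set.mem_compl_iff, Set.mem_union,
    Set.mem_image, not_or, not_exists, not_and]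
  constructor
  · rintro ⟨-, hv⟩
    refine ⟨fun t ht hc => ?_, fun t ht hm => ?_⟩
    · exact center_notMem_pendants (hdec.nodup ht) (hc ▸ hv t ht (hc ▸ mem_verts.2 (.inl rfl)))
    · exact mid_notMem_pendants (hdec.nodup ht)
        (hm ▸ hv t ht (hm ▸ mem_verts.2 (.inr (.inl rfl))))
  · rintro ⟨hc, hm⟩
    obtain ⟨w, hw⟩ := hG v
    refine ⟨hdec.exists_mem_verts hw, fun t ht hv => ?_⟩
    rw [mem_verts] at hv
    rw [mem_pendants]
    rcases hv with rfl | rfl | hv | hv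
    · exact absurd rfl (hc t ht)
    · exact absurd rfl (hm t ht)
    · exact .inl hv
    · exact .inr hv

section LocallyFinite

variable [G.LocallyFinite]

lemma ncard_neighborSet_add_ncard_neighborSet_le_degree (hdec : IsDSDecompOf G r 𝒟)
    (h₁ : t₁ ∈ 𝒟) (h₂ : t₂ ∈ 𝒟) (hne : t₁ ≠ t₂) (v : V) :
    (t₁.neighborSet v).ncard + (t₂.neighborSet v).ncard ≤ G.degree v := by
  have hdisj : Disjoint (t₁.neighborSet v) (t₂.neighborSet v) :=
    Set.disjoint_left.2 fun _ hw₁ hw₂ => hne (hdec.eq_of_mem_edges h₁ h₂ hw₁ hw₂)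
  have hsub {t} (ht : t ∈ 𝒟) : t.neighborSet v ⊆ G.neighborSet v := fun _ hw =>
    hdec.edges_subset_edgeSet ht hw
  have hfin := (G.neighborSet v).toFinite
  rw [← Set.ncard_union_eq hdisj (hfin.subset (hsub h₁)) (hfin.subset (hsub h₂)),
    ← card_neighborSet_eq_degree, ← Nat.card_eq_fintype_card, Nat.card_coe_set_eq]
  exact Set.ncard_le_ncard (Set.union_subset (hsub h₁) (hsub h₂)) hfin

lemma injOn_center (hdec : IsDSDecompOf G r 𝒟) (hdeg : ∀ v, G.degree v ≤ r) :
    Set.InjOn DoubleStarCopy.center 𝒟 := by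
  intro t₁ h₁ t₂ h₂ hc
  by_contra hne
  have h := hdec.ncard_neighborSet_add_ncard_neighborSet_le_degree h₁ h₂ hne t₁.center
  rw [ncard_neighborSet_center (hdec.nodup h₁), hc,
    ncard_neighborSet_center (hdec.nodup h₂)] at h
  have := hdeg t₂.center
  omega

lemma injOn_mid (hdec : IsDSDecompOf G r 𝒟) (hdeg : ∀ v, G.degree v ≤ 3) :
    Set.InjOn DoubleStarCopy.mid 𝒟 := by
  intro t₁ h₁ t₂ h₂ hm
  by_contra hne
  have h := hdec.ncard_neighborSet_add_ncard_neighborSet_le_degree h₁ h₂ hne t₁.mid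
  rw [ncard_neighborSet_mid (hdec.nodup h₁), hm, ncard_neighborSet_mid (hdec.nodup h₂)] at h
  have := hdeg t₂.mid
  omega

lemma disjoint_image_center_image_mid (hdec : IsDSDecompOf G r 𝒟) (hdeg : ∀ v, G.degree v ≤ r) :
    Disjoint (DoubleStarCopy.center '' 𝒟) (DoubleStarCopy.mid '' 𝒟) := by
  rw [Set.disjoint_left]
  rintro _ ⟨t₁, h₁, rfl⟩ ⟨t₂, h₂, hm⟩
  obtain rfl | hne := eq_or_ne t₂ t₁
  · exact center_ne_mid (hdec.nodup h₂) hm.symm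
  have h := hdec.ncard_neighborSet_add_ncard_neighborSet_le_degree h₁ h₂ hne.symm t₁.center
  rw [ncard_neighborSet_center (hdec.nodup h₁), ← hm, ncard_neighborSet_mid (hdec.nodup h₂)] at h
  have := hdeg t₂.mid
  omega

end LocallyFinite

end IsDSDecompOf

/-- Let `G` be a cubic graph of order `n` with an `S_{1,2}`-decomposition
`𝒟`, and let `T` be the set of vertices occurring only as pendant vertices in the copies of
`S_{1,2}` of `𝒟`.  Then `T` is an independent set and `|T| = n/4`. -/
theorem statement3 {V : Type*} [Fintype V] (G : SimpleGraph V) [DecidableRel G.Adj]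
    (n : ℕ) (hn : Fintype.card V = n) (hcubic : G.IsRegularOfDegree 3)
    (𝒟 : Set (DoubleStarCopy V 3)) (hdec : IsDSDecompOf G 3 𝒟)
    (T : Set V)
    (hT : T = {v | (∃ t ∈ 𝒟, v ∈ t.verts) ∧ ∀ t ∈ 𝒟, v ∈ t.verts → v ∈ t.pendants}) :
    IsIndepSetIn G T ∧ 4 * T.ncard = n := by
  have hdeg (v : V) : G.degree v ≤ 3 := (hcubic v).le
  have hadj (v : V) : ∃ w, G.Adj v w :=
    (G.degree_pos_iff_exists_adj v).1 (by rw [hcubic v]; norm_num)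
  have hT' : T = (DoubleStarCopy.center '' 𝒟 ∪ DoubleStarCopy.mid '' 𝒟)ᶜ :=
    hT.trans (hdec.pendantOnlyVerts_eq_compl hadj)
  refine ⟨hT ▸ hdec.isIndepSetIn_pendantOnlyVerts, ?_⟩
  have hedges : G.edgeFinset.card = 4 * 𝒟.ncard := hdec.card_edgeFinset
  have hhandshake : 3 * n = 2 * G.edgeFinset.card := by
    rw [← G.sum_degrees_eq_twice_card_edges, Finset.sum_congr rfl fun v _ => hcubic v]
    simp [hn, mul_comm]
  have hcentersMids :
      (DoubleStarCopy.center '' 𝒟 ∪ DoubleStarCopy.mid '' 𝒟).ncard = 2 * 𝒟.ncard := by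
    rw [Set.ncard_union_eq (hdec.disjoint_image_center_image_mid hdeg),
      (hdec.injOn_center hdeg).ncard_image, (hdec.injOn_mid hdeg).ncard_image, two_mul]
  have hsplit := Set.ncard_add_ncard_compl (DoubleStarCopy.center '' 𝒟 ∪ DoubleStarCopy.mid '' 𝒟)
  rw [← hT', Nat.card_eq_fintype_card, hn] at hsplit
  omega
end

section
/- Let G be a cubic (3-regular) bipartite simple graph of order n. If the domination number of G satisfies γ(G) = n/4, then G has an S_{1,2}-decomposition. -/
/-!
A dominating set of size `n/4` in a cubic graph is a perfect code: the closed neighbourhoods of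
its vertices have size 4 and cover all `n` vertices, so they partition `V`. Hence `D` is
independent, every vertex outside `D` has exactly one neighbour in `D`, and `G - D` is a 2-regular
bipartite graph, which has a perfect matching `f : A ∖ D ≃ B ∖ D` by Hall's theorem. For
`a ∈ A ∖ D`, the three edges at `a` together with the edge from `f a` to its neighbour in `D`
form an `S_{1,2}`. An edge with an end `a ∈ A ∖ D` lies only in the star of `a`; every other
edge joins some `d ∈ D ∩ A` to `b ∈ B ∖ D` and lies only in the star of `f⁻¹ b`.
-/

open SimpleGraph

variable {V : Type*}

open Finset Function

variable {G : SimpleGraph V}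

theorem existsUnique_mem_range_of_existsUnique {α β : Type*} {f : α → β} {p : β → Prop}
    (h : ∃! a, p (f a)) : ∃! b, b ∈ Set.range f ∧ p b := by
  obtain ⟨a, ha, huniq⟩ := h
  exact ⟨f a, ⟨⟨a, rfl⟩, ha⟩, by rintro _ ⟨⟨a', rfl⟩, ha'⟩; rw [huniq a' ha']⟩

theorem Finset.exists_eq_insert_insert_singleton_of_card_eq_three {α : Type*} [DecidableEq α]
    {s : Finset α} (hs : #s = 3) {x y : α} (hx : x ∈ s) (hy : y ∈ s) (hxy : x ≠ y) :
    ∃ z, z ≠ x ∧ z ≠ y ∧ s = {x, y, z} := by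
  have hcard : #((s.erase x).erase y) = 1 := by
    rw [card_erase_of_mem (mem_erase.2 ⟨hxy.symm, hy⟩), card_erase_of_mem hx, hs]
  obtain ⟨z, hz⟩ := card_eq_one.1 hcard
  have hmem : ∀ w, w ∈ (s.erase x).erase y ↔ w = z := fun w => by rw [hz, mem_singleton]
  simp only [mem_erase] at hmem
  refine ⟨z, ((hmem z).2 rfl).2.1, ((hmem z).2 rfl).1, ?_⟩
  ext w
  simp only [mem_insert, mem_singleton]
  grind

theorem Finset.exists_equiv_of_biregular {α β : Type*} [DecidableEq β] (r : α → β → Prop)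
    [∀ a b, Decidable (r a b)] {s : Finset α} {t : Finset β} {k : ℕ} (hk : 0 < k)
    (hs : ∀ a ∈ s, #(t.bipartiteAbove r a) = k) (ht : ∀ b ∈ t, #(s.bipartiteBelow r b) = k) :
    ∃ f : s ≃ t, ∀ a : s, r a (f a) := by
  have hcard : #s = #t := Nat.eq_of_mul_eq_mul_right hk (card_mul_eq_card_mul r hs ht)
  have hall : ∀ u : Finset s, #u ≤ #(u.biUnion fun a => t.bipartiteAbove r a) := by
    intro u
    refine le_of_mul_le_mul_right
      (card_mul_le_card_mul (fun (a : s) b => r a b) (m := k) (n := k) ?_ ?_) hk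
    · intro a ha
      rw [← hs a a.2]
      refine card_le_card fun b hb => ?_
      exact mem_filter.2 ⟨mem_biUnion.2 ⟨a, ha, hb⟩, (mem_filter.1 hb).2⟩
    · intro b hb
      obtain ⟨a, -, hab⟩ := mem_biUnion.1 hb
      rw [← ht b (mem_filter.1 hab).1]
      refine card_le_card_of_injOn Subtype.val (fun a ha => ?_) Subtype.val_injective.injOn
      exact mem_filter.2 ⟨a.2, (mem_filter.1 ha).2⟩
  obtain ⟨f, hf, hft⟩ := (all_card_le_biUnion_card_iff_exists_injective _).1 hall
  let g : s → t := fun a => ⟨f a, (mem_filter.1 (hft a)).1⟩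
  have hg : Bijective g := (Fintype.bijective_iff_injective_and_card g).2
    ⟨fun a b h => hf (congrArg Subtype.val h), by simpa using hcard⟩
  exact ⟨Equiv.ofBijective g hg, fun a => (mem_filter.1 (hft a)).2⟩

theorem DoubleStarCopy.mem_edges_mk {c m p l₁ l₂ : V} {e : Sym2 V} :
    e ∈ (⟨c, m, p, ![l₁, l₂]⟩ : DoubleStarCopy V 3).edges ↔
      e = s(c, m) ∨ e = s(m, p) ∨ e = s(c, l₁) ∨ e = s(c, l₂) := by
  simp [DoubleStarCopy.edges, Fin.exists_fin_two, eq_comm]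

theorem DoubleStarCopy.vertList_mk {c m p l₁ l₂ : V} :
    (⟨c, m, p, ![l₁, l₂]⟩ : DoubleStarCopy V 3).vertList = [c, m, p, l₁, l₂] := by
  simp [DoubleStarCopy.vertList, List.ofFn_succ]

theorem IsBipartitionOf.mem_iff_notMem_of_adj {A B : Set V} (h : IsBipartitionOf G A B) {u v : V}
    (huv : G.Adj u v) : u ∈ A ↔ v ∉ A := by
  obtain ⟨hunion, hdisj, hadj⟩ := h
  rw [hadj huv]
  exact ⟨fun hvB hvA => hdisj.notMem_of_mem_left hvA hvB,
    fun hvA => (Set.eq_univ_iff_forall.1 hunion v).resolve_left hvA⟩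

theorem exists_isDomSet_ncard_eq_domNumber (G : SimpleGraph V) :
    ∃ D, IsDomSet G D ∧ D.ncard = domNumber G :=
  Nat.sInf_mem (s := {k | ∃ D : Set V, IsDomSet G D ∧ D.ncard = k})
    ⟨_, Set.univ, fun v hv => absurd (Set.mem_univ v) hv, rfl⟩

def IsPerfectCode (G : SimpleGraph V) (D : Set V) : Prop :=
  ∀ v, ∃! d, d ∈ D ∧ (v = d ∨ G.Adj v d)

theorem IsDomSet.isPerfectCode [Fintype V] [DecidableRel G.Adj] {k : ℕ}
    (hreg : G.IsRegularOfDegree k) {D : Set V} (hD : IsDomSet G D)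
    (hcard : (k + 1) * D.ncard ≤ Fintype.card V) : IsPerfectCode G D := by
  classical
  let r : V → V → Prop := fun v d => v = d ∨ G.Adj v d
  have hclosed : ∀ d, #((univ : Finset V).bipartiteBelow r d) = k + 1 := by
    intro d
    have : (univ : Finset V).bipartiteBelow r d = insert d (G.neighborFinset d) := by
      ext v
      simp [r, bipartiteBelow, G.adj_comm]
    rw [this, card_insert_of_notMem (by simp), card_neighborFinset_eq_degree, hreg d]
  have hdominated : ∀ v, 1 ≤ #(D.toFinset.bipartiteAbove r v) := by
    intro v
    refine one_le_card.2 ?_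
    by_cases hv : v ∈ D
    · exact ⟨v, by simp [bipartiteAbove, r, hv]⟩
    · obtain ⟨d, hd, hvd⟩ := hD v hv
      exact ⟨d, by simp [bipartiteAbove, r, hd, hvd]⟩
  have hsum : ∑ v, #(D.toFinset.bipartiteAbove r v) = ∑ _v : V, 1 := by
    refine le_antisymm ?_ (sum_le_sum fun v _ => hdominated v)
    rw [sum_card_bipartiteAbove_eq_sum_card_bipartiteBelow, sum_congr rfl fun d _ => hclosed d]
    simpa [Set.ncard_eq_toFinset_card', mul_comm] using hcard
  intro v
  have := (sum_eq_sum_iff_of_le fun v _ => hdominated v).1 hsum.symm v (mem_univ v)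
  simpa [bipartiteAbove, r] using card_eq_one_iff_existsUnique.1 this.symm

namespace IsPerfectCode

variable {D : Set V} (hD : IsPerfectCode G D)
include hD

theorem not_adj {d d' : V} (hd : d ∈ D) (hd' : d' ∈ D) : ¬ G.Adj d d' := fun h =>
  G.ne_of_adj h ((hD d).unique ⟨hd, Or.inl rfl⟩ ⟨hd', Or.inr h⟩)

noncomputable def dominator (v : V) : V := (hD v).exists.choose

theorem dominator_mem (v : V) : hD.dominator v ∈ D := (hD v).exists.choose_spec.1

theorem adj_dominator {v : V} (hv : v ∉ D) : G.Adj v (hD.dominator v) :=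
  (hD v).exists.choose_spec.2.resolve_left fun h => hv (h ▸ hD.dominator_mem v)

theorem eq_dominator {v d : V} (hd : d ∈ D) (h : G.Adj v d) : d = hD.dominator v :=
  (hD v).unique ⟨hd, Or.inr h⟩ (hD v).exists.choose_spec

theorem card_neighborFinset_filter_notMem [Fintype V] [DecidableRel G.Adj]
    [DecidablePred (· ∈ D)] {k : ℕ} (hreg : G.IsRegularOfDegree k) {v : V} (hv : v ∉ D) :
    #{w ∈ G.neighborFinset v | w ∉ D} = k - 1 := by
  have hinD : {w ∈ G.neighborFinset v | w ∈ D} = {hD.dominator v} := by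
    ext w
    simp only [mem_filter, mem_neighborFinset, mem_singleton]
    exact ⟨fun ⟨hvw, hw⟩ => hD.eq_dominator hw hvw,
      by rintro rfl; exact ⟨hD.adj_dominator hv, hD.dominator_mem v⟩⟩
  have hsplit := card_filter_add_card_filter_not (s := G.neighborFinset v) (· ∈ D)
  rw [hinD, card_singleton, card_neighborFinset_eq_degree, hreg v] at hsplit
  omega

theorem exists_third_neighbor [Fintype V] [DecidableRel G.Adj] (hcubic : G.IsRegularOfDegree 3)
    {a m : V} (haD : a ∉ D) (hm : G.Adj a m) (hmD : m ∉ D) :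
    ∃ l, l ∉ D ∧ G.Adj a l ∧ m ≠ l ∧
      ∀ w, G.Adj a w → w = m ∨ w = l ∨ w = hD.dominator a := by
  classical
  obtain ⟨l, hlm, hldom, hN⟩ := exists_eq_insert_insert_singleton_of_card_eq_three
    (by rw [card_neighborFinset_eq_degree, hcubic a]) ((G.mem_neighborFinset _ _).2 hm)
    ((G.mem_neighborFinset _ _).2 (hD.adj_dominator haD))
    (fun h => hmD (h ▸ hD.dominator_mem a))
  have hnbr : ∀ w, G.Adj a w ↔ w = m ∨ w = hD.dominator a ∨ w = l := fun w => by
    rw [← mem_neighborFinset, hN, mem_insert, mem_insert, mem_singleton]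
  have hl : G.Adj a l := (hnbr l).2 (Or.inr (Or.inr rfl))
  refine ⟨l, fun hlD => hldom (hD.eq_dominator hlD hl), hl, hlm.symm, fun w hw => ?_⟩
  have := (hnbr w).1 hw
  tauto

noncomputable def doubleStar (a m l : V) : DoubleStarCopy V 3 :=
  ⟨a, m, hD.dominator m, ![l, hD.dominator a]⟩

variable {A : Set V} (hA : ∀ ⦃u v⦄, G.Adj u v → (u ∈ A ↔ v ∉ A))
include hA

theorem exists_equiv_adj [Fintype V] [DecidableRel G.Adj] {k : ℕ} (hk : 2 ≤ k)
    (hreg : G.IsRegularOfDegree k) :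
    ∃ f : {v // v ∈ A ∧ v ∉ D} ≃ {v // v ∉ A ∧ v ∉ D},
      ∀ a, G.Adj a.1 (f a).1 := by
  classical
  let X : Finset V := {v | v ∈ A ∧ v ∉ D}
  let Y : Finset V := {v | v ∉ A ∧ v ∉ D}
  have hX : ∀ a ∈ X, #(Y.bipartiteAbove G.Adj a) = k - 1 := by
    intro a ha
    simp only [X, mem_filter, mem_univ, true_and] at ha
    rw [← hD.card_neighborFinset_filter_notMem hreg ha.2]
    congr 1
    ext w
    simp only [bipartiteAbove, Y, mem_filter, mem_univ, true_and, mem_neighborFinset]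
    exact ⟨fun ⟨⟨_, hwD⟩, haw⟩ => ⟨haw, hwD⟩,
      fun ⟨haw, hwD⟩ => ⟨⟨(hA haw).1 ha.1, hwD⟩, haw⟩⟩
  have hY : ∀ b ∈ Y, #(X.bipartiteBelow G.Adj b) = k - 1 := by
    intro b hb
    simp only [Y, mem_filter, mem_univ, true_and] at hb
    rw [← hD.card_neighborFinset_filter_notMem hreg hb.2]
    congr 1
    ext w
    simp only [bipartiteBelow, X, mem_filter, mem_univ, true_and, mem_neighborFinset]
    exact ⟨fun ⟨⟨_, hwD⟩, hwb⟩ => ⟨hwb.symm, hwD⟩,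
      fun ⟨hbw, hwD⟩ => ⟨⟨(hA hbw.symm).2 hb.1, hwD⟩, hbw.symm⟩⟩
  obtain ⟨f, hf⟩ := exists_equiv_of_biregular G.Adj (by omega) hX hY
  let eX : {v // v ∈ A ∧ v ∉ D} ≃ X := Equiv.subtypeEquivRight (by simp [X])
  let eY : Y ≃ {v // v ∉ A ∧ v ∉ D} := Equiv.subtypeEquivRight (by simp [Y])
  exact ⟨eX.trans (f.trans eY), fun a => hf (eX a)⟩

theorem doubleStar_isCopyIn {a m l : V} (ha : a ∈ A) (haD : a ∉ D) (hm : G.Adj a m)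
    (hmD : m ∉ D) (hl : G.Adj a l) (hlD : l ∉ D) (hml : m ≠ l) :
    (hD.doubleStar a m l).IsCopyIn G := by
  have hmdom := hD.adj_dominator hmD
  have hadom := hD.adj_dominator haD
  have hmA := (hA hm).1 ha
  have hlA := (hA hl).1 ha
  have hdomm := hD.dominator_mem m
  have hdoma := hD.dominator_mem a
  have hdommA := (hA hmdom.symm).2 hmA
  have hdomaA := (hA hadom).1 ha
  refine ⟨?_, fun e he => ?_⟩
  · rw [doubleStar, DoubleStarCopy.vertList_mk]
    simp only [List.nodup_cons, List.mem_cons, List.not_mem_nil, List.nodup_nil, or_false]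
    grind
  · rw [doubleStar, DoubleStarCopy.mem_edges_mk] at he
    rcases he with rfl | rfl | rfl | rfl <;> assumption

theorem mk_mem_edges_doubleStar_iff {a m l : V} (ha : a ∈ A) (hm : G.Adj a m)
    (hnbr : ∀ w, G.Adj a w → w = m ∨ w = l ∨ w = hD.dominator a) {u v : V} (huv : G.Adj u v)
    (hu : u ∈ A) :
    s(u, v) ∈ (hD.doubleStar a m l).edges ↔ u = a ∨ (v = m ∧ u = hD.dominator m) := by
  have hmA := (hA hm).1 ha
  have hvA := (hA huv).1 hu
  rw [doubleStar, DoubleStarCopy.mem_edges_mk]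
  simp only [Sym2.eq_iff]
  grind

theorem existsUnique_center_or_pendant
    (f : {v // v ∈ A ∧ v ∉ D} ≃ {v // v ∉ A ∧ v ∉ D})
    {u v : V} (huv : G.Adj u v) (hu : u ∈ A) :
    ∃! a : {v // v ∈ A ∧ v ∉ D}, u = a ∨ (v = f a ∧ u = hD.dominator (f a)) := by
  by_cases huD : u ∈ D
  · have hvD : v ∉ D := fun hvD => hD.not_adj huD hvD huv
    refine ⟨f.symm ⟨v, (hA huv).1 hu, hvD⟩, Or.inr ⟨by simp, ?_⟩, ?_⟩
    · simpa using hD.eq_dominator huD huv.symm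
    · rintro a (rfl | ⟨hv, -⟩)
      · exact absurd huD a.2.2
      · exact (f.symm_apply_eq.2 (Subtype.ext hv)).symm
  · refine ⟨⟨u, hu, huD⟩, Or.inl rfl, ?_⟩
    rintro a (h | ⟨-, h⟩)
    · exact Subtype.ext h.symm
    · exact absurd (h ▸ hD.dominator_mem _) huD

theorem hasDSDecomp [Fintype V] [DecidableRel G.Adj] (hcubic : G.IsRegularOfDegree 3) :
    HasDSDecomp G 3 := by
  obtain ⟨f, hf⟩ := hD.exists_equiv_adj hA (by norm_num) hcubic
  choose g hgD hg hfg hnbr using fun a : {v // v ∈ A ∧ v ∉ D} =>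
    hD.exists_third_neighbor hcubic a.2.2 (hf a) (f a).2.2
  refine ⟨Set.range fun a : {v // v ∈ A ∧ v ∉ D} => hD.doubleStar a (f a) (g a), ?_,
    fun e he => ?_⟩
  · rintro _ ⟨a, rfl⟩
    exact hD.doubleStar_isCopyIn hA a.2.1 a.2.2 (hf a) (f a).2.2 (hg a) (hgD a) (hfg a)
  induction e using Sym2.ind with | h u v => ?_
  have huv : G.Adj u v := he
  wlog hu : u ∈ A generalizing u v
  · rw [Sym2.eq_swap]
    exact this v u (by rwa [Sym2.eq_swap]) huv.symm ((hA huv.symm).2 hu)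
  refine existsUnique_mem_range_of_existsUnique ((existsUnique_congr fun a =>
    hD.mk_mem_edges_doubleStar_iff hA a.2.1 (hf a) (hnbr a) huv hu).2 ?_)
  exact hD.existsUnique_center_or_pendant hA f huv hu

end IsPerfectCode

/-- If `G` is a cubic bipartite graph of order `n` with `γ(G) = n/4`,
then `G` has an `S_{1,2}`-decomposition. -/
theorem statement9 {V : Type*} [Fintype V] (G : SimpleGraph V) [DecidableRel G.Adj]
    (n : ℕ) (hn : Fintype.card V = n) (hcubic : G.IsRegularOfDegree 3)
    (hbip : ∃ A B : Set V, IsBipartitionOf G A B)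
    (hdom : 4 * domNumber G = n) :
    HasDSDecomp G 3 := by
  obtain ⟨A, B, hAB⟩ := hbip
  obtain ⟨D, hDdom, hDcard⟩ := exists_isDomSet_ncard_eq_domNumber G
  have hD : IsPerfectCode G D := hDdom.isPerfectCode hcubic (by omega)
  exact hD.hasDSDecomp (fun _ _ huv => hAB.mem_iff_notMem_of_adj huv) hcubic
end

section
/- Let G be a cubic (3-regular) bipartite simple graph of order n with bipartition (A, B), and let S ⊆ A be a subset of size 3n/8. Then G is (S_{1,2}, S)-decomposable if and only if the bipartite subgraph of G induced between S and N(A∖S) has a perfect matching (a matching saturating both S and N(A∖S)). -/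
open SimpleGraph

variable {V : Type*}

/-!
Since `G` is cubic, `|A| = |B| = n/2`, so `|A ∖ S| = n/8` and `|S| = 3|A ∖ S|`.

In an `S_{1,2}`-decomposition every edge at a centre lies in the copy centred there. Hence the
pendant vertex of the copy centred at `s ∈ S` lies in `A ∖ S`, its middle vertex in `N(A ∖ S)`,
and distinct copies have distinct middle vertices because these have degree 3. So `s ↦ mid`
is an injective matching of `S` into `N(A ∖ S)`, which has at most `3|A ∖ S| = |S|` vertices.

Conversely a perfect matching `m` forces `|N(A ∖ S)| = 3|A ∖ S|`, so every `b ∈ N(A ∖ S)` has a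
unique neighbour `p b` in `A ∖ S`. The copies centred at `s ∈ S` with middle vertex `m s` and
pendant vertex `p (m s)` decompose `G`: they cover the edges at `S` as centre edges and the
edges at `A ∖ S` as middle–pendant edges.
-/

namespace IsBipartitionOf

open Finset

variable {G : SimpleGraph V} {A B : Set V} {u v : V}

lemma symm (h : IsBipartitionOf G A B) : IsBipartitionOf G B A :=
  ⟨by rw [Set.union_comm, h.1], h.2.1.symm, fun _ _ huv => (h.2.2 huv.symm).symm⟩

lemma mem_right_of_adj (h : IsBipartitionOf G A B) (huv : G.Adj u v) (hu : u ∈ A) : v ∈ B :=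
  (h.2.2 huv).1 hu

lemma mem_left_of_adj (h : IsBipartitionOf G A B) (huv : G.Adj u v) (hv : v ∈ B) : u ∈ A :=
  (h.2.2 huv).2 hv

lemma notMem_right (h : IsBipartitionOf G A B) (hu : u ∈ A) : u ∉ B :=
  Set.disjoint_left.1 h.2.1 hu

lemma mem_left_or_mem_right (h : IsBipartitionOf G A B) (u : V) : u ∈ A ∨ u ∈ B := by
  rw [← Set.mem_union, h.1]
  trivial

lemma exists_eq_mk (h : IsBipartitionOf G A B) {e : Sym2 V} (he : e ∈ G.edgeSet) :
    ∃ a b, a ∈ A ∧ G.Adj a b ∧ e = s(a, b) := by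
  induction e using Sym2.ind with
  | _ u v =>
    rcases h.mem_left_or_mem_right u with hu | hu
    · exact ⟨u, v, hu, he, rfl⟩
    · exact ⟨v, u, h.mem_left_of_adj (G.adj_symm he) hu, G.adj_symm he, Sym2.eq_swap⟩

lemma ncard_left_eq_ncard_right [Fintype V] [DecidableRel G.Adj] {k : ℕ}
    (h : IsBipartitionOf G A B) (hreg : G.IsRegularOfDegree k) (hk : k ≠ 0) :
    A.ncard = B.ncard := by
  classical
  obtain ⟨A, rfl⟩ := A.toFinite.exists_finset_coe
  obtain ⟨B, rfl⟩ := B.toFinite.exists_finset_coe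
  have hnbrs {X Y : Finset V} (hXY : ∀ ⦃x y⦄, x ∈ X → G.Adj x y → y ∈ Y) (x : V) (hx : x ∈ X) :
      #{y ∈ Y | G.Adj x y} = k := by
    rw [← hreg x, ← card_neighborFinset_eq_degree]
    congr 1
    ext y
    simpa using fun hxy => hXY hx hxy
  have hcount := card_mul_eq_card_mul G.Adj (m := k) (n := k)
    (hnbrs fun _ _ hx hxy => h.mem_right_of_adj hxy hx)
    (fun b hb => by
      rw [bipartiteBelow, ← hnbrs (fun _ _ hx hxy => h.symm.mem_right_of_adj hxy hx) b hb]
      exact congrArg _ (filter_congr fun _ _ => G.adj_comm _ _))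
  simpa only [Set.ncard_coe_finset] using
    Nat.eq_of_mul_eq_mul_right (Nat.pos_of_ne_zero hk) hcount

end IsBipartitionOf

section Regular

open Finset

variable [Fintype V] {G : SimpleGraph V} [DecidableRel G.Adj] {k : ℕ}

lemma coe_biUnion_neighborFinset [DecidableEq V] (X : Finset V) :
    ↑(X.biUnion (G.neighborFinset ·)) = nbhd G ↑X := by
  ext v
  simp [nbhd]

lemma one_le_card_filter_adj [DecidableEq V] {X : Finset V} {b : V}
    (hb : b ∈ X.biUnion (G.neighborFinset ·)) : 1 ≤ #{a ∈ X | G.Adj a b} := by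
  obtain ⟨a, ha, hab⟩ := mem_biUnion.1 hb
  exact card_pos.2 ⟨a, mem_filter.2 ⟨ha, (G.mem_neighborFinset a b).1 hab⟩⟩

lemma sum_card_filter_adj_biUnion_neighborFinset [DecidableEq V] (hreg : G.IsRegularOfDegree k)
    (X : Finset V) : ∑ b ∈ X.biUnion (G.neighborFinset ·), #{a ∈ X | G.Adj a b} = k * #X := by
  have hcount := sum_card_bipartiteAbove_eq_sum_card_bipartiteBelow (s := X)
    (t := X.biUnion (G.neighborFinset ·)) G.Adj
  have habove : ∀ a ∈ X, #((X.biUnion (G.neighborFinset ·)).bipartiteAbove G.Adj a) = k := by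
    intro a ha
    rw [← hreg a, ← card_neighborFinset_eq_degree, bipartiteAbove]
    congr 1
    ext b
    simpa using fun hab => ⟨a, ha, hab⟩
  rw [sum_congr rfl habove, sum_const, smul_eq_mul, mul_comm] at hcount
  exact hcount.symm

lemma ncard_nbhd_le (hreg : G.IsRegularOfDegree k) (X : Set V) :
    (nbhd G X).ncard ≤ k * X.ncard := by
  classical
  obtain ⟨X, rfl⟩ := X.toFinite.exists_finset_coe
  rw [← coe_biUnion_neighborFinset, Set.ncard_coe_finset, Set.ncard_coe_finset,
    ← sum_card_filter_adj_biUnion_neighborFinset hreg, card_eq_sum_ones]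
  exact sum_le_sum fun _ => one_le_card_filter_adj

lemma existsUnique_adj_of_ncard_nbhd_eq {X : Set V} (hreg : G.IsRegularOfDegree k)
    (hX : (nbhd G X).ncard = k * X.ncard) : ∀ b ∈ nbhd G X, ∃! a, a ∈ X ∧ G.Adj b a := by
  classical
  obtain ⟨X, rfl⟩ := X.toFinite.exists_finset_coe
  rw [← coe_biUnion_neighborFinset, Set.ncard_coe_finset, Set.ncard_coe_finset,
    ← sum_card_filter_adj_biUnion_neighborFinset hreg, card_eq_sum_ones,
    sum_eq_sum_iff_of_le fun _ => one_le_card_filter_adj] at hX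
  intro b hb
  rw [← coe_biUnion_neighborFinset, mem_coe] at hb
  obtain ⟨a, ha⟩ := card_eq_one.1 (hX b hb).symm
  have hmem : ∀ x, x ∈ X ∧ G.Adj b x ↔ x = a := fun x => by
    simpa [G.adj_comm] using Finset.ext_iff.1 ha x
  exact ⟨a, (hmem a).2 rfl, fun x hx => (hmem x).1 hx⟩

end Regular

namespace DoubleStarCopy

variable {G : SimpleGraph V} {r : ℕ} {t : DoubleStarCopy V r}

lemma center_mid_mem_edges (t : DoubleStarCopy V r) : s(t.center, t.mid) ∈ t.edges :=
  Set.mem_insert _ _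

lemma mid_pend_mem_edges (t : DoubleStarCopy V r) : s(t.mid, t.pend) ∈ t.edges :=
  Set.mem_insert_of_mem _ (Set.mem_insert _ _)

lemma center_leaf_mem_edges (t : DoubleStarCopy V r) (i : Fin (r - 1)) :
    s(t.center, t.leaf i) ∈ t.edges :=
  Set.mem_insert_of_mem _ (Set.mem_insert_of_mem _ ⟨i, rfl⟩)

namespace IsCopyIn

lemma adj_center_mid (ht : t.IsCopyIn G) : G.Adj t.center t.mid :=
  ht.2 t.center_mid_mem_edges

lemma adj_mid_pend (ht : t.IsCopyIn G) : G.Adj t.mid t.pend :=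
  ht.2 t.mid_pend_mem_edges

lemma adj_center_leaf (ht : t.IsCopyIn G) (i : Fin (r - 1)) : G.Adj t.center (t.leaf i) :=
  ht.2 (t.center_leaf_mem_edges i)

lemma center_ne_pend (ht : t.IsCopyIn G) : t.center ≠ t.pend := by
  have h := ht.1
  simp only [vertList, List.nodup_cons, List.mem_cons] at h
  tauto

lemma mid_notMem_range_leaf (ht : t.IsCopyIn G) : t.mid ∉ Set.range t.leaf := by
  have h := ht.1
  simp only [vertList, List.nodup_cons, List.mem_cons, List.mem_ofFn] at h
  tauto

lemma leaf_injective (ht : t.IsCopyIn G) : Function.Injective t.leaf := by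
  have h := ht.1
  simp only [vertList, List.nodup_cons, List.nodup_ofFn] at h
  exact h.2.2.2

variable [Fintype V] [DecidableRel G.Adj]

lemma adj_center_iff (hreg : G.IsRegularOfDegree r) (ht : t.IsCopyIn G) {w : V} :
    G.Adj t.center w ↔ w = t.mid ∨ w ∈ Set.range t.leaf := by
  classical
  refine ⟨fun hw => ?_, ?_⟩
  · set N := insert t.mid (Finset.univ.image t.leaf)
    have hsub : N ⊆ G.neighborFinset t.center := by
      intro x hx
      simp only [N, Finset.mem_insert, Finset.mem_image, Finset.mem_univ, true_and] at hx
      rcases hx with rfl | ⟨i, rfl⟩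
      · exact (G.mem_neighborFinset _ _).2 ht.adj_center_mid
      · exact (G.mem_neighborFinset _ _).2 (ht.adj_center_leaf i)
    have hcard : Finset.card (G.neighborFinset t.center) ≤ N.card := by
      rw [card_neighborFinset_eq_degree, hreg,
        Finset.card_insert_of_notMem (by simpa using ht.mid_notMem_range_leaf),
        Finset.card_image_of_injective _ ht.leaf_injective, Finset.card_univ, Fintype.card_fin]
      omega
    have hwN := Finset.eq_of_subset_of_card_le hsub hcard ▸ (G.mem_neighborFinset _ _).2 hw
    simpa [N, eq_comm] using hwN
  · rintro (rfl | ⟨i, rfl⟩)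
    · exact ht.adj_center_mid
    · exact ht.adj_center_leaf i

lemma mem_edges_iff (hreg : G.IsRegularOfDegree r) (ht : t.IsCopyIn G) {e : Sym2 V} :
    e ∈ t.edges ↔ e = s(t.mid, t.pend) ∨ e ∈ G.incidenceSet t.center := by
  constructor
  · rintro (rfl | rfl | ⟨i, rfl⟩)
    · exact .inr ⟨ht.adj_center_mid, Sym2.mem_mk_left _ _⟩
    · exact .inl rfl
    · exact .inr ⟨ht.adj_center_leaf i, Sym2.mem_mk_left _ _⟩
  · rintro (rfl | ⟨he, hc⟩)
    · exact t.mid_pend_mem_edges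
    · obtain ⟨w, rfl⟩ := Sym2.mem_iff_exists.1 hc
      rcases (ht.adj_center_iff hreg).1 he with rfl | ⟨i, rfl⟩
      · exact t.center_mid_mem_edges
      · exact t.center_leaf_mem_edges i

end IsCopyIn

end DoubleStarCopy

namespace IsDSDecompOf

open DoubleStarCopy

variable {G : SimpleGraph V} {r : ℕ} {𝒟 : Set (DoubleStarCopy V r)} {t t' : DoubleStarCopy V r}

lemma eq_of_mem_edges_s10 (h : IsDSDecompOf G r 𝒟) (ht : t ∈ 𝒟) (ht' : t' ∈ 𝒟) {e : Sym2 V}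
    (he : e ∈ t.edges) (he' : e ∈ t'.edges) : t = t' :=
  (h.2 e ((h.1 t ht).2 he)).unique ⟨ht, he⟩ ⟨ht', he'⟩

/-- Two copies with middle vertex `b` would contribute four distinct edges at `b`. -/
lemma mid_injOn [Fintype V] [DecidableRel G.Adj] (h : IsDSDecompOf G r 𝒟)
    (hdeg : ∀ v, G.degree v ≤ 3) : Set.InjOn mid 𝒟 := by
  classical
  intro t ht t' ht' hmid
  by_contra hne
  have hdisj : ∀ x y, s(t.mid, x) ∈ t.edges → s(t.mid, y) ∈ t'.edges → x ≠ y := by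
    rintro x _ hx hy rfl
    exact hne (h.eq_of_mem_edges_s10 ht ht' hx hy)
  have hc : s(t.mid, t.center) ∈ t.edges := Sym2.eq_swap ▸ t.center_mid_mem_edges
  have hc' : s(t.mid, t'.center) ∈ t'.edges := hmid ▸ Sym2.eq_swap ▸ t'.center_mid_mem_edges
  have hp : s(t.mid, t.pend) ∈ t.edges := t.mid_pend_mem_edges
  have hp' : s(t.mid, t'.pend) ∈ t'.edges := hmid ▸ t'.mid_pend_mem_edges
  have hsub : ({t.center, t.pend, t'.center, t'.pend} : Finset V) ⊆ G.neighborFinset t.mid := by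
    intro x hx
    simp only [Finset.mem_insert, Finset.mem_singleton] at hx
    rw [mem_neighborFinset]
    rcases hx with rfl | rfl | rfl | rfl
    · exact (h.1 t ht).adj_center_mid.symm
    · exact (h.1 t ht).adj_mid_pend
    · exact hmid ▸ (h.1 t' ht').adj_center_mid.symm
    · exact hmid ▸ (h.1 t' ht').adj_mid_pend
  have hcard : Finset.card {t.center, t.pend, t'.center, t'.pend} = 4 := by
    rw [Finset.card_insert_of_notMem, Finset.card_insert_of_notMem, Finset.card_pair]
    · exact (h.1 t' ht').center_ne_pend
    · simp [hdisj _ _ hp hc', hdisj _ _ hp hp']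
    · simp [(h.1 t ht).center_ne_pend, hdisj _ _ hc hc', hdisj _ _ hc hp']
  have := Finset.card_le_card hsub
  rw [hcard, card_neighborFinset_eq_degree] at this
  have := hdeg t.mid
  omega

/-- Every edge at a centre already belongs to the copy centred there. -/
lemma center_ne_pend [Fintype V] [DecidableRel G.Adj] (h : IsDSDecompOf G r 𝒟)
    (hreg : G.IsRegularOfDegree r) (ht : t ∈ 𝒟) (ht' : t' ∈ 𝒟) : t'.center ≠ t.pend := by
  intro hcp
  have hmp : s(t.mid, t.pend) ∈ t'.edges := ((h.1 t' ht').mem_edges_iff hreg).2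
    (.inr ⟨(h.1 t ht).adj_mid_pend, hcp ▸ Sym2.mem_mk_right _ _⟩)
  obtain rfl := h.eq_of_mem_edges_s10 ht ht' t.mid_pend_mem_edges hmp
  exact (h.1 t ht).center_ne_pend hcp

end IsDSDecompOf

lemma exists_equiv_nbhd_of_isDSSDecomposable [Fintype V] {G : SimpleGraph V} [DecidableRel G.Adj]
    {A B S : Set V} (hreg : G.IsRegularOfDegree 3) (hbip : IsBipartitionOf G A B) (hSA : S ⊆ A)
    (hle : (nbhd G (A \ S)).ncard ≤ S.ncard) (hdec : IsDSSDecomposable G 3 S) :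
    ∃ m : S ≃ nbhd G (A \ S), ∀ s : S, G.Adj s (m s) := by
  obtain ⟨𝒟, h𝒟, hS⟩ := hdec
  have hcenter (s : S) : ∃ t ∈ 𝒟, t.center = s := hS ▸ s.2
  choose T hT hTc using hcenter
  have hadj (s : S) : G.Adj s (T s).mid := hTc s ▸ (h𝒟.1 _ (hT s)).adj_center_mid
  have hmid (s : S) : (T s).mid ∈ nbhd G (A \ S) := by
    refine ⟨(T s).pend, ⟨?_, fun hpS => ?_⟩, (h𝒟.1 _ (hT s)).adj_mid_pend.symm⟩
    · exact hbip.mem_left_of_adj (h𝒟.1 _ (hT s)).adj_mid_pend.symm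
        (hbip.mem_right_of_adj (hadj s) (hSA s.2))
    · obtain ⟨t', ht', hc⟩ := hS ▸ hpS
      exact h𝒟.center_ne_pend hreg (hT s) ht' hc
  let f (s : S) : nbhd G (A \ S) := ⟨(T s).mid, hmid s⟩
  have hf : Function.Injective f := fun s s' hss' => Subtype.ext <| by
    rw [← hTc s, ← hTc s', h𝒟.mid_injOn (fun v => (hreg v).le) (hT s) (hT s')
      (congrArg Subtype.val hss')]
  refine ⟨.ofBijective f (hf.bijective_of_nat_card_le ?_), hadj⟩
  simpa only [Nat.card_coe_set_eq] using hle

lemma isDSSDecomposable_of_existsUnique {G : SimpleGraph V} {r : ℕ} {S : Set V} (F : S → DoubleStarCopy V r)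
    (hF : ∀ s, (F s).IsCopyIn G) (hc : ∀ s, (F s).center = s)
    (h : ∀ e ∈ G.edgeSet, ∃! s, e ∈ (F s).edges) : IsDSSDecomposable G r S := by
  refine ⟨Set.range F, ⟨?_, fun e he => ?_⟩, ?_⟩
  · rintro _ ⟨s, rfl⟩
    exact hF s
  · obtain ⟨s, hs, huniq⟩ := h e he
    refine ⟨F s, ⟨⟨s, rfl⟩, hs⟩, ?_⟩
    rintro _ ⟨⟨s', rfl⟩, hs'⟩
    rw [huniq s' hs']
  · ext v
    constructor
    · intro hv
      exact ⟨F ⟨v, hv⟩, ⟨_, rfl⟩, hc _⟩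
    · rintro ⟨_, ⟨s, rfl⟩, rfl⟩
      exact hc s ▸ s.2


section Construction

variable [Fintype V] {G : SimpleGraph V} [DecidableRel G.Adj] {r : ℕ}

lemma exists_injective_range_eq_neighborSet_diff (hreg : G.IsRegularOfDegree r) {v w : V}
    (hvw : G.Adj v w) :
    ∃ f : Fin (r - 1) → V, Function.Injective f ∧ Set.range f = G.neighborSet v \ {w} := by
  classical
  have hcard : Finset.card ((G.neighborFinset v).erase w) = r - 1 := by
    rw [Finset.card_erase_of_mem ((G.mem_neighborFinset _ _).2 hvw), card_neighborFinset_eq_degree,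
      hreg]
  let e := Finset.equivFinOfCardEq hcard
  refine ⟨fun i => e.symm i, Subtype.val_injective.comp e.symm.injective, ?_⟩
  ext x
  constructor
  · rintro ⟨i, rfl⟩
    obtain ⟨hne, hadj⟩ := Finset.mem_erase.1 (e.symm i).2
    exact ⟨(G.mem_neighborFinset _ _).1 hadj, hne⟩
  · rintro ⟨hx, hxw⟩
    have hx' : x ∈ (G.neighborFinset v).erase w := by simp_all
    exact ⟨e ⟨x, hx'⟩, by simp⟩

lemma exists_doubleStarCopy_of_adj (hreg : G.IsRegularOfDegree r) {v w p : V} (hvw : G.Adj v w)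
    (hwp : G.Adj w p) (hpv : p ≠ v) (hvp : ¬ G.Adj v p) :
    ∃ t : DoubleStarCopy V r, t.IsCopyIn G ∧ t.center = v ∧ t.mid = w ∧ t.pend = p := by
  obtain ⟨f, hf, hrange⟩ := exists_injective_range_eq_neighborSet_diff hreg hvw
  have hleaf (i : Fin (r - 1)) : G.Adj v (f i) ∧ f i ≠ w := by
    have hi : f i ∈ G.neighborSet v \ {w} := hrange ▸ Set.mem_range_self i
    exact hi
  refine ⟨⟨v, w, p, f⟩, ⟨?_, ?_⟩, rfl, rfl, rfl⟩
  · simp only [DoubleStarCopy.vertList, List.nodup_cons, List.mem_cons, List.mem_ofFn,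
      List.nodup_ofFn, not_or, not_exists]
    refine ⟨⟨hvw.ne, hpv.symm, fun i h => (hleaf i).1.ne h.symm⟩,
      ⟨hwp.ne, fun i h => (hleaf i).2 h⟩, fun i h => hvp (h ▸ (hleaf i).1), hf⟩
  · rintro e (rfl | rfl | ⟨i, rfl⟩)
    exacts [hvw, hwp, (hleaf i).1]

lemma isDSSDecomposable_of_equiv_nbhd {A B S : Set V} (hreg : G.IsRegularOfDegree r)
    (hbip : IsBipartitionOf G A B) (hSA : S ⊆ A)
    (hpend : ∀ b ∈ nbhd G (A \ S), ∃! a, a ∈ A \ S ∧ G.Adj b a)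
    (m : S ≃ nbhd G (A \ S)) (hm : ∀ s : S, G.Adj s (m s)) : IsDSSDecomposable G r S := by
  choose p hp hp_unique using hpend
  have hcopy (s : S) : ∃ t : DoubleStarCopy V r, t.IsCopyIn G ∧ t.center = s ∧
      t.mid = m s ∧ t.pend = p (m s) (m s).2 := by
    refine exists_doubleStarCopy_of_adj hreg (hm s) (hp _ _).2 (fun h => (hp _ _).1.2 (h ▸ s.2)) fun h => ?_
    exact hbip.notMem_right (hp _ _).1.1 (hbip.mem_right_of_adj h (hSA s.2))
  choose T hT hTc hTm hTp using hcopy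
  have hmem (s : S) {a b : V} (ha : a ∈ A) (hab : G.Adj a b) :
      s(a, b) ∈ (T s).edges ↔ a = s ∨ (b = m s ∧ a ∉ S) := by
    have hmB : (m s : V) ∈ B := hbip.mem_right_of_adj (hm s) (hSA s.2)
    rw [(hT s).mem_edges_iff hreg, hTm, hTp, hTc]
    constructor
    · rintro (h | ⟨-, hs⟩)
      · rcases Sym2.eq_iff.1 h with ⟨rfl, -⟩ | ⟨rfl, rfl⟩
        · exact absurd hmB (hbip.notMem_right ha)
        · exact .inr ⟨rfl, (hp _ _).1.2⟩
      · rcases Sym2.mem_iff.1 hs with h | h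
        · exact .inl h.symm
        · exact absurd (h ▸ hbip.mem_right_of_adj hab ha) (hbip.notMem_right (hSA s.2))
    · rintro (rfl | ⟨rfl, haS⟩)
      · exact .inr ⟨hab, Sym2.mem_mk_left _ _⟩
      · exact .inl (by rw [Sym2.eq_swap, ← hp_unique _ _ a ⟨⟨ha, haS⟩, hab.symm⟩])
  refine isDSSDecomposable_of_existsUnique T hT hTc fun e he => ?_
  obtain ⟨a, b, ha, hab, rfl⟩ := hbip.exists_eq_mk he
  simp only [hmem _ ha hab]
  by_cases haS : a ∈ S
  · refine ⟨⟨a, haS⟩, .inl rfl, fun s hs => ?_⟩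
    exact Subtype.ext (hs.resolve_right fun h => h.2 haS).symm
  · have hb : b ∈ nbhd G (A \ S) := ⟨a, ⟨ha, haS⟩, hab⟩
    refine ⟨m.symm ⟨b, hb⟩, .inr ⟨by simp, haS⟩, fun s hs => ?_⟩
    have hbs := (hs.resolve_left fun h => haS (h ▸ s.2)).1
    exact m.eq_symm_apply.2 (Subtype.ext hbs.symm)

end Construction

/-- Let `G` be a cubic bipartite graph of order `n` with bipartition
`(A, B)` and let `S ⊆ A` have size `3n/8`.  Then `G` is `(S_{1,2}, S)`-decomposable iff the
bipartite subgraph of `G` induced between `S` and `N(A ∖ S)` has a perfect matching. -/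
theorem statement10 {V : Type*} [Fintype V] (G : SimpleGraph V) [DecidableRel G.Adj]
    (n : ℕ) (hn : Fintype.card V = n) (hcubic : G.IsRegularOfDegree 3)
    (A B : Set V) (hbip : IsBipartitionOf G A B)
    (S : Set V) (hSA : S ⊆ A) (hcard : 8 * S.ncard = 3 * n) :
    IsDSSDecomposable G 3 S ↔
      ∃ m : ↥S ≃ ↥(nbhd G (A \ S)), ∀ s : ↥S, G.Adj ↑s ↑(m s) := by
  have hAB : A.ncard = B.ncard := hbip.ncard_left_eq_ncard_right hcubic three_ne_zero
  have hABn : A.ncard + B.ncard = n := by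
    rw [← Set.ncard_union_eq hbip.2.1, hbip.1, Set.ncard_univ, Nat.card_eq_fintype_card, hn]
  have hS : S.ncard = 3 * (A \ S).ncard := by
    rw [Set.ncard_sdiff hSA]
    have := Set.ncard_le_ncard hSA
    omega
  constructor
  · exact exists_equiv_nbhd_of_isDSSDecomposable hcubic hbip hSA
      ((ncard_nbhd_le hcubic _).trans hS.ge)
  · rintro ⟨m, hm⟩
    have hN : (nbhd G (A \ S)).ncard = 3 * (A \ S).ncard := by
      rw [← hS, ← Nat.card_coe_set_eq, ← Nat.card_coe_set_eq, Nat.card_congr m]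
    exact isDSSDecomposable_of_equiv_nbhd hcubic hbip hSA
      (existsUnique_adj_of_ncard_nbhd_eq hcubic hN) m hm
end

section
/- Let G be a cubic (3-regular) simple graph of order n with independence number α(G) = 3n/8, and let S ⊆ V(G) be an independent set with |S| = 3n/8 such that no vertex of S is contained in a triangle of G. If u and v are two distinct vertices of G∖S each having degree 2 in G∖S, then the (one-element) neighborhoods of u and v in S are distinct, i.e. N_S(u) ≠ N_S(v). -/
open SimpleGraph

variable {V : Type*}

/-
As `G` is cubic and `u` has degree 2 in `G ∖ S`, `N_S(u)` is a single vertex `s`. If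
`N_S(v) = {s}` as well, then `u` and `v` are non-adjacent, since otherwise `s u v` is a
triangle through `s`. Exchanging `s` for `u` and `v` then turns `S` into an independent set of
size `|S| + 1`, which is impossible because `|S| = 3n/8 = α(G)`.
-/

section

variable {G : SimpleGraph V}

theorem inCycleOfLength_three_of_adj {a b c : V} (hab : G.Adj a b) (hbc : G.Adj b c)
    (hca : G.Adj c a) : InCycleOfLength G a 3 :=
  ⟨.cons hab (.cons hbc (.cons hca .nil)), by
    have := hab.ne; have := hbc.ne; have := hca.ne
    simp [Walk.isCycle_def, Walk.isTrail_def]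
    tauto, rfl⟩

theorem ncard_le_indepNumber [Finite V] {T : Set V} (hT : IsIndepSetIn G T) :
    T.ncard ≤ indepNumber G :=
  le_csSup ⟨Nat.card V, by rintro k ⟨T, -, rfl⟩; exact Set.ncard_le_card T⟩ ⟨T, hT, rfl⟩

theorem ncard_neighborSet_inter_add_degIn (S : Set V) (w : V) [Fintype (G.neighborSet w)] :
    (G.neighborSet w ∩ S).ncard + degIn G S w = G.degree w := by
  have hdeg : degIn G S w = (G.neighborSet w \ S).ncard :=
    congrArg Set.ncard (Set.ext fun _ => and_comm)
  rw [hdeg, Set.ncard_inter_add_ncard_sdiff_eq_ncard _ _ (Set.toFinite _),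
    ← card_neighborSet_eq_degree, ← Nat.card_coe_set_eq, Nat.card_eq_fintype_card]

theorem IsIndepSetIn.insert_insert_diff_singleton {S : Set V} (hS : IsIndepSetIn G S)
    {s u v : V} (hnuv : ¬ G.Adj u v) (hu : G.neighborSet u ∩ S ⊆ {s})
    (hv : G.neighborSet v ∩ S ⊆ {s}) :
    IsIndepSetIn G (insert u (insert v (S \ {s}))) := by
  have hu' : ∀ x ∈ S \ {s}, ¬ G.Adj u x := fun x hx hux => hx.2 (hu ⟨hux, hx.1⟩)
  have hv' : ∀ x ∈ S \ {s}, ¬ G.Adj v x := fun x hx hvx => hx.2 (hv ⟨hvx, hx.1⟩)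
  rintro a (rfl | rfl | ha) b (rfl | rfl | hb) hab
  exacts [G.irrefl hab, hnuv hab, hu' b hb hab, hnuv hab.symm, G.irrefl hab, hv' b hb hab,
    hu' a ha hab.symm, hv' a ha hab.symm, hS ha.1 hb.1 hab]

end

theorem statement15_general {V : Type*} [Fintype V] (G : SimpleGraph V) [DecidableRel G.Adj]
    (n : ℕ) (hcubic : G.IsRegularOfDegree 3)
    (halpha : 8 * indepNumber G = 3 * n)
    (S : Set V) (hind : IsIndepSetIn G S) (hcard : 8 * S.ncard = 3 * n)
    (htri : ∀ s ∈ S, ¬ InCycleOfLength G s 3)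
    (u v : V) (hu : u ∉ S) (hv : v ∉ S) (huv : u ≠ v)
    (hdu : degIn G S u = 2) :
    G.neighborSet u ∩ S ≠ G.neighborSet v ∩ S := by
  intro heq
  have hone : (G.neighborSet u ∩ S).ncard = 1 := by
    have := ncard_neighborSet_inter_add_degIn (G := G) S u
    rw [hdu, hcubic u] at this
    omega
  obtain ⟨s, hs⟩ := Set.ncard_eq_one.mp hone
  have hus : s ∈ G.neighborSet u ∩ S := hs ▸ rfl
  have hvs : s ∈ G.neighborSet v ∩ S := heq ▸ hus
  have hnuv : ¬ G.Adj u v := fun hadj =>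
    htri s hus.2 (inCycleOfLength_three_of_adj hus.1.symm hadj hvs.1)
  have hT := hind.insert_insert_diff_singleton hnuv hs.subset (heq ▸ hs).subset
  have hTcard : (insert u (insert v (S \ {s}))).ncard = S.ncard + 1 := by
    rw [Set.ncard_insert_of_notMem, Set.ncard_exchange hv hus.2]
    rintro (rfl | hmem)
    exacts [huv rfl, hu hmem.1]
  have := ncard_le_indepNumber hT
  omega

/-- Let `G` be a cubic graph of order `n` with `α(G) = 3n/8` and let `S`
be an independent set of size `3n/8` no vertex of which lies in a triangle.  If `u ≠ v`
both have degree 2 in `G ∖ S`, then `N_S(u) ≠ N_S(v)`. -/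
theorem statement15 {V : Type*} [Fintype V] (G : SimpleGraph V) [DecidableRel G.Adj]
    (n : ℕ) (hn : Fintype.card V = n) (hcubic : G.IsRegularOfDegree 3)
    (halpha : 8 * indepNumber G = 3 * n)
    (S : Set V) (hind : IsIndepSetIn G S) (hcard : 8 * S.ncard = 3 * n)
    (htri : ∀ s ∈ S, ¬ InCycleOfLength G s 3)
    (u v : V) (hu : u ∉ S) (hv : v ∉ S) (huv : u ≠ v)
    (hdu : degIn G S u = 2) (hdv : degIn G S v = 2) :
    G.neighborSet u ∩ S ≠ G.neighborSet v ∩ S :=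
  statement15_general G n hcubic halpha S hind hcard htri u v hu hv huv hdu
end

section
/- Let G be a cubic (3-regular) bipartite simple graph of order n with bipartition (A, B), and let D be a dominating set of G with |D| = n/4. Then |D ∩ A| = |D ∩ B| = n/8, and no two distinct vertices of D have a common neighbor in V(G)∖D. -/
/-! The closed neighbourhoods of the vertices of `D` cover `V` and, `G` being cubic, have four
elements each, so `|D| = n/4` forces them to partition `V`: `D` is a perfect code. In particular
`D` is independent and no vertex outside `D` has two neighbours in `D`. In the bipartite graph
the vertices of `B ∖ D` are then exactly the neighbours of `D ∩ A`, three for each, so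
`|B| = |D ∩ B| + 3|D ∩ A|` and symmetrically `|A| = |D ∩ A| + 3|D ∩ B|`; since `|A| = |B|` by
counting edges, `|D ∩ A| = |D ∩ B| = n/8`. -/

open SimpleGraph

variable {V : Type*}

open Finset

namespace SimpleGraph

section ClosedNeighborhood

variable [Fintype V] [DecidableEq V] (G : SimpleGraph V) [DecidableRel G.Adj]

def closedNeighborFinset (v : V) : Finset V := insert v (G.neighborFinset v)

variable {G}

theorem mem_closedNeighborFinset {v w : V} :
    w ∈ G.closedNeighborFinset v ↔ w = v ∨ G.Adj v w := by
  rw [closedNeighborFinset, mem_insert, mem_neighborFinset]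

theorem card_closedNeighborFinset (v : V) : #(G.closedNeighborFinset v) = G.degree v + 1 := by
  rw [closedNeighborFinset, card_insert_of_notMem (G.notMem_neighborFinset_self v),
    card_neighborFinset_eq_degree]

end ClosedNeighborhood

theorem IsRegularOfDegree.mul_card_eq_of_isBipartiteWith [Fintype V] {G : SimpleGraph V}
    [DecidableRel G.Adj] {k : ℕ} (hreg : G.IsRegularOfDegree k) {A B : Finset V}
    (hbip : G.IsBipartiteWith A B) : k * #A = k * #B := by
  have hdeg := isBipartiteWith_sum_degrees_eq hbip
  simp only [hreg _, sum_const, smul_eq_mul] at hdeg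
  rw [mul_comm, hdeg, mul_comm]

end SimpleGraph

theorem IsBipartitionOf.isBipartiteWith {G : SimpleGraph V} {A B : Set V}
    (h : IsBipartitionOf G A B) : G.IsBipartiteWith A B where
  disjoint := h.2.1
  mem_of_adj u v huv := by
    have hcover : ∀ x, x ∉ A → x ∈ B := fun x hx =>
      (h.1 ▸ Set.mem_univ x : x ∈ A ∪ B).resolve_left hx
    by_cases hu : u ∈ A
    · exact .inl ⟨hu, (h.2.2 huv).1 hu⟩
    · exact .inr ⟨hcover u hu, by_contra fun hv => hu ((h.2.2 huv).2 (hcover v hv))⟩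

namespace IsDomSet

variable [Fintype V] [DecidableEq V] {G : SimpleGraph V} [DecidableRel G.Adj] {k : ℕ}
  {D : Finset V}

theorem card_dominators_eq_one (hdom : IsDomSet G D) (hreg : G.IsRegularOfDegree k)
    (hcard : (k + 1) * #D = Fintype.card V) (v : V) :
    #{d ∈ D | v ∈ G.closedNeighborFinset d} = 1 := by
  have hpos : ∀ u ∈ univ, 1 ≤ #{d ∈ D | u ∈ G.closedNeighborFinset d} := by
    intro u _
    rw [one_le_card]
    by_cases hu : u ∈ D
    · exact ⟨u, mem_filter.2 ⟨hu, mem_closedNeighborFinset.2 (Or.inl rfl)⟩⟩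
    · obtain ⟨d, hd, hadj⟩ := hdom u (mod_cast hu)
      exact ⟨d, mem_filter.2 ⟨hd, mem_closedNeighborFinset.2 (Or.inr hadj.symm)⟩⟩
  have hsum : ∑ v, #{d ∈ D | v ∈ G.closedNeighborFinset d} = ∑ _v : V, 1 := by
    calc ∑ v, #{d ∈ D | v ∈ G.closedNeighborFinset d}
        = ∑ d ∈ D, #{v | v ∈ G.closedNeighborFinset d} :=
          (sum_card_bipartiteAbove_eq_sum_card_bipartiteBelow _).symm
      _ = ∑ _d ∈ D, (k + 1) := sum_congr rfl fun d _ => by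
          rw [filter_univ_mem, card_closedNeighborFinset, hreg]
      _ = ∑ _v : V, 1 := by
          rw [sum_const, smul_eq_mul, mul_comm, hcard, sum_const, smul_eq_mul, mul_one, card_univ]
  exact ((sum_eq_sum_iff_of_le hpos).1 hsum.symm v (mem_univ v)).symm

theorem eq_of_mem_closedNeighborFinset (hdom : IsDomSet G D) (hreg : G.IsRegularOfDegree k)
    (hcard : (k + 1) * #D = Fintype.card V) {d₁ d₂ v : V} (h₁ : d₁ ∈ D) (h₂ : d₂ ∈ D)
    (hv₁ : v ∈ G.closedNeighborFinset d₁) (hv₂ : v ∈ G.closedNeighborFinset d₂) : d₁ = d₂ :=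
  card_le_one.1 (hdom.card_dominators_eq_one hreg hcard v).le d₁ (mem_filter.2 ⟨h₁, hv₁⟩)
    d₂ (mem_filter.2 ⟨h₂, hv₂⟩)

theorem not_adj_of_mem (hdom : IsDomSet G D) (hreg : G.IsRegularOfDegree k)
    (hcard : (k + 1) * #D = Fintype.card V) {d₁ d₂ : V} (h₁ : d₁ ∈ D) (h₂ : d₂ ∈ D) :
    ¬ G.Adj d₁ d₂ := fun hadj =>
  hadj.ne <| hdom.eq_of_mem_closedNeighborFinset hreg hcard h₁ h₂
    (mem_closedNeighborFinset.2 (Or.inr hadj)) (mem_closedNeighborFinset.2 (Or.inl rfl))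

theorem card_sdiff_eq_mul_card_inter (hdom : IsDomSet G D) (hreg : G.IsRegularOfDegree k)
    (hcard : (k + 1) * #D = Fintype.card V) {A B : Finset V} (hbip : G.IsBipartiteWith A B) :
    #(B \ D) = k * #(D ∩ A) := by
  have hunion : B \ D = (D ∩ A).biUnion fun d => G.neighborFinset d := by
    ext w
    simp only [mem_sdiff, mem_biUnion, mem_inter, mem_neighborFinset]
    constructor
    · rintro ⟨hwB, hwD⟩
      obtain ⟨d, hd, hadj⟩ := hdom w (mod_cast hwD)
      exact ⟨d, ⟨hd, mod_cast hbip.mem_of_mem_adj' (mod_cast hwB) hadj.symm⟩, hadj.symm⟩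
    · rintro ⟨d, ⟨hd, hdA⟩, hadj⟩
      exact ⟨mod_cast hbip.mem_of_mem_adj (mod_cast hdA) hadj,
        fun hw => hdom.not_adj_of_mem hreg hcard hd hw hadj⟩
  have hdisj : (↑(D ∩ A) : Set V).PairwiseDisjoint fun d => G.neighborFinset d := by
    intro d₁ h₁ d₂ h₂ hne
    refine disjoint_left.2 fun w hw₁ hw₂ => hne ?_
    exact hdom.eq_of_mem_closedNeighborFinset hreg hcard (mem_inter.1 h₁).1 (mem_inter.1 h₂).1
      (mem_closedNeighborFinset.2 (Or.inr ((mem_neighborFinset _ _ _).1 hw₁)))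
      (mem_closedNeighborFinset.2 (Or.inr ((mem_neighborFinset _ _ _).1 hw₂)))
  rw [hunion, card_biUnion hdisj]
  simp only [card_neighborFinset_eq_degree, hreg _, sum_const, smul_eq_mul, mul_comm]

end IsDomSet

/-- Let `G` be a cubic bipartite graph of order `n` with bipartition
`(A, B)` and let `D` be a dominating set with `|D| = n/4`.  Then
`|D ∩ A| = |D ∩ B| = n/8` and no two distinct vertices of `D` have a common neighbour
outside `D`. -/
theorem statement18 {V : Type*} [Fintype V] (G : SimpleGraph V) [DecidableRel G.Adj]
    (n : ℕ) (hn : Fintype.card V = n) (hcubic : G.IsRegularOfDegree 3)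
    (A B : Set V) (hbip : IsBipartitionOf G A B)
    (D : Set V) (hdom : IsDomSet G D) (hcard : 4 * D.ncard = n) :
    8 * (D ∩ A).ncard = n ∧ 8 * (D ∩ B).ncard = n ∧
      ∀ d₁ ∈ D, ∀ d₂ ∈ D, d₁ ≠ d₂ → ¬ ∃ w, w ∉ D ∧ G.Adj d₁ w ∧ G.Adj d₂ w := by
  classical
  obtain ⟨A, rfl⟩ := A.toFinite.exists_finset_coe
  obtain ⟨B, rfl⟩ := B.toFinite.exists_finset_coe
  obtain ⟨D, rfl⟩ := D.toFinite.exists_finset_coe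
  simp only [← coe_inter, Set.ncard_coe_finset] at hcard ⊢
  have hperfect : (3 + 1) * #D = Fintype.card V := by omega
  have hAB : #A + #B = n := by
    rw [← card_union_of_disjoint (disjoint_coe.1 hbip.2.1), ← hn, ← card_univ]
    exact congrArg card (coe_inj.1 (by simpa using hbip.1))
  have hBD := hdom.card_sdiff_eq_mul_card_inter hcubic hperfect hbip.isBipartiteWith
  have hAD := hdom.card_sdiff_eq_mul_card_inter hcubic hperfect hbip.isBipartiteWith.symm
  have hbalanced := hcubic.mul_card_eq_of_isBipartiteWith hbip.isBipartiteWith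
  have hsplitA := card_inter_add_card_sdiff A D
  have hsplitB := card_inter_add_card_sdiff B D
  rw [inter_comm] at hsplitA hsplitB
  refine ⟨by omega, by omega, ?_⟩
  rintro d₁ h₁ d₂ h₂ hne ⟨w, -, hw₁, hw₂⟩
  exact hne (hdom.eq_of_mem_closedNeighborFinset hcubic hperfect h₁ h₂
    (mem_closedNeighborFinset.2 (Or.inr hw₁)) (mem_closedNeighborFinset.2 (Or.inr hw₂)))
end
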